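/- arXiv:2008.06882 — 2 statements merged into one kernel-verified Lean document; each statement's English description precedes it below -/
import Mathlib

section
/- (Main discrete-time theorem) Let X, Y, Z be adapted integrable processes on {0,...,T} with X_T = Y_T = Z_T, L = X ∧ Z, U = Y ∨ Z, and V defined by V_T = Z_T, V_t = min{U_t, max{L_t, E[V_{t+1}|F_t]}}. Then the inequality X_t ∧ Y_t ≤ V_t ≤ X_t ∨ Y_t holds for all t = 0,...,T if and only if the Dynkin game GDG_t(X,Y,Z) has a Nash equilibrium for every t = 0,...,T. -/
/-!
Under the sandwich condition, the first time `τ*` after `t` at which `V` reaches the lower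
obstacle `X ∧ Z` secures `V_t` to the maximiser. This is a backward induction on
`{n ≤ τ* ∧ n ≤ σ}`: before `τ*` the recursion gives `V_n ≤ E[V_{n+1} | F_n]`, and if the
minimiser stops first she pays `Y_n ≥ V_n`, which is where `V ≤ X ∨ Y` enters. In the game
`(-Y, -X, -Z)`, whose value is `-V`, the same argument shows that the first time `V` reaches
`Y ∨ Z` secures `V_t` to the minimiser, so the two times form a Nash equilibrium.

Conversely, let `(τ, σ)` be an equilibrium at `t < T` with value `W`, and assume the sandwich
condition after `t`. The minimiser may deviate to stopping at `t` if `τ > t` and at `T`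
otherwise, so `W ≤ X_t ∨ Y_t`. The maximiser may deviate to stopping at `t` if `σ = t` and to the
optimal time from `t + 1` otherwise, so `Z_t ∧ E[V_{t+1} | F_t] ≤ W`. The recursion gives
`V_t ≤ (X_t ∨ Y_t) ∨ (Z_t ∧ E[V_{t+1} | F_t])`, hence `V_t ≤ X_t ∨ Y_t`; the lower bound is the
same statement for `(-Y, -X, -Z)`.
-/

open MeasureTheory Filter Set

noncomputable def payoffD {Ω : Type*} (X Y Z : ℕ → Ω → ℝ) (τ σ : Ω → ℕ) (ω : Ω) : ℝ :=
  if τ ω < σ ω then X (τ ω) ω else if σ ω < τ ω then Y (σ ω) ω else Z (σ ω) ω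

lemma le_max_max_min_of_eq {v x y z e : ℝ} (h : v = min (max y z) (max (min x z) e)) :
    v ≤ max (max x y) (min z e) := by
  grind

lemma neg_le_max_neg_neg_iff {v x y : ℝ} : -v ≤ max (-y) (-x) ↔ min x y ≤ v := by
  rw [max_neg_neg, neg_le_neg_iff, min_comm]

section CondExp

variable {Ω : Type*} {m m0 : MeasurableSpace Ω} {μ : Measure Ω} {B : Set Ω} {f g : Ω → ℝ}

lemma condExp_piecewise [DecidablePred (· ∈ B)] (hB : MeasurableSet[m] B)
    (hf : Integrable f μ) (hg : Integrable g μ) :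
    μ[B.piecewise f g | m] =ᵐ[μ] B.piecewise (μ[f | m]) (μ[g | m]) := by
  by_cases hm : m ≤ m0
  · rw [← indicator_add_compl_eq_piecewise, ← indicator_add_compl_eq_piecewise]
    filter_upwards [condExp_add (hf.indicator (hm _ hB)) (hg.indicator (hm _ hB.compl)) m,
      condExp_indicator hf hB, condExp_indicator hg hB.compl] with ω h hf' hg'
    simp only [h, Pi.add_apply, hf', hg']
  · simp_rw [condExp_of_not_le hm, piecewise_same]; rfl

lemma condExp_mono_on (hB : MeasurableSet[m] B) (hf : Integrable f μ) (hg : Integrable g μ)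
    (hfg : ∀ᵐ ω ∂μ, ω ∈ B → f ω ≤ g ω) :
    ∀ᵐ ω ∂μ, ω ∈ B → μ[f | m] ω ≤ μ[g | m] ω := by
  classical
  have hle : B.piecewise f g ≤ᵐ[μ] g := by
    filter_upwards [hfg] with ω h
    by_cases hω : ω ∈ B <;> simp [hω, h]
  by_cases hm : m ≤ m0
  · have hpw : Integrable (B.piecewise f g) μ :=
      Integrable.piecewise (hm _ hB) hf.integrableOn hg.integrableOn
    filter_upwards [condExp_mono (m := m) hpw hg hle, condExp_piecewise hB hf hg]
      with ω h hpw hω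
    simpa [hpw, hω] using h
  · simp [condExp_of_not_le hm]

end CondExp

section StoppingTime

variable {Ω : Type*} {m0 : MeasurableSpace Ω} {ℱ : Filtration ℕ m0} {τ η : Ω → ℕ}

namespace MeasureTheory.IsStoppingTime

lemma measurableSet_ge_nat (hτ : IsStoppingTime ℱ fun ω => (τ ω : WithTop ℕ)) (n : ℕ) :
    MeasurableSet[ℱ n] {ω | n ≤ τ ω} := by
  simpa using hτ.measurableSet_ge n

lemma measurableSet_gt_nat (hτ : IsStoppingTime ℱ fun ω => (τ ω : WithTop ℕ)) (n : ℕ) :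
    MeasurableSet[ℱ n] {ω | n < τ ω} := by
  simpa using hτ.measurableSet_gt n

lemma measurable_nat (hτ : IsStoppingTime ℱ fun ω => (τ ω : WithTop ℕ)) : Measurable τ := by
  refine measurable_to_countable' fun n => ℱ.le n _ ?_
  have := hτ.measurableSet_eq n
  simp only [Nat.cast_withTop, WithTop.coe_inj] at this
  exact this

lemma piecewise_of_le_nat {s : Set Ω} [DecidablePred (· ∈ s)] {n : ℕ}
    (hτ : IsStoppingTime ℱ fun ω => (τ ω : WithTop ℕ))
    (hη : IsStoppingTime ℱ fun ω => (η ω : WithTop ℕ))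
    (hτn : ∀ ω, n ≤ τ ω) (hηn : ∀ ω, n ≤ η ω) (hs : MeasurableSet[ℱ n] s) :
    IsStoppingTime ℱ fun ω => (s.piecewise τ η ω : WithTop ℕ) := by
  convert hτ.piecewise_of_le hη (i := n) (fun ω => WithTop.coe_le_coe.2 (hτn ω))
    (fun ω => WithTop.coe_le_coe.2 (hηn ω)) hs
    using 1
  ext ω
  by_cases hω : ω ∈ s <;> simp [hω]

end MeasureTheory.IsStoppingTime

lemma isStoppingTime_hittingBtwn_of_measurable_le {β : Type*} [MeasurableSpace β]
    {u : ℕ → Ω → β} {s : Set β} {n T : ℕ} (hu : ∀ k ≤ T, Measurable[ℱ k] (u k))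
    (hs : MeasurableSet s) :
    IsStoppingTime ℱ fun ω => ((hittingBtwn u s n T ω : ℕ) : WithTop ℕ) := by
  have htrunc : hittingBtwn u s n T = hittingBtwn (fun k => u (min k T)) s n T := by
    ext ω
    have hIcc : ∀ k ∈ Icc n T, min k T = k := fun k hk => min_eq_left hk.2
    simp only [hittingBtwn_def]
    congr 1
    · exact propext ⟨fun ⟨j, hj, h⟩ => ⟨j, hj, by rwa [hIcc j hj]⟩,
        fun ⟨j, hj, h⟩ => ⟨j, hj, by rwa [hIcc j hj] at h⟩⟩
    · congr 1
      ext k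
      constructor <;> rintro ⟨hk, h⟩ <;> refine ⟨hk, ?_⟩ <;> simpa [hIcc k hk] using h
  rw [htrunc]
  exact Adapted.isStoppingTime_hittingBtwn
    (fun k => (hu _ (min_le_right k T)).mono (ℱ.mono (min_le_left k T)) le_rfl) hs

end StoppingTime

section Payoff

variable {Ω : Type*} {m0 : MeasurableSpace Ω} {μ : Measure Ω}

lemma integrable_apply_of_mem_finset {ι : Type*} [MeasurableSpace ι]
    [MeasurableSingletonClass ι] {F : ι → Ω → ℝ} {κ : Ω → ι} (s : Finset ι)
    (hκ : Measurable κ) (hκs : ∀ ω, κ ω ∈ s) (hF : ∀ i ∈ s, Integrable (F i) μ) :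
    Integrable (fun ω => F (κ ω) ω) μ := by
  classical
  have hsum : (fun ω => F (κ ω) ω) = ∑ i ∈ s, (κ ⁻¹' {i}).indicator (F i) := by
    ext ω
    rw [Finset.sum_apply, Finset.sum_eq_single_of_mem (κ ω) (hκs ω)]
    · simp
    · intro i _ hi
      simp [Ne.symm hi]
  rw [hsum]
  exact integrable_finsetSum' _ fun i hi => (hF i hi).indicator (hκ (measurableSet_singleton i))

variable {X Y Z : ℕ → Ω → ℝ} {τ σ : Ω → ℕ} {T : ℕ}

lemma integrable_payoffD (hX : ∀ s, Integrable (X s) μ) (hY : ∀ s, Integrable (Y s) μ)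
    (hZ : ∀ s, Integrable (Z s) μ) (hτ : Measurable τ) (hσ : Measurable σ)
    (hτT : ∀ ω, τ ω ≤ T) (hσT : ∀ ω, σ ω ≤ T) :
    Integrable (payoffD X Y Z τ σ) μ := by
  refine integrable_apply_of_mem_finset
    (F := fun p ω => if p.1 < p.2 then X p.1 ω else if p.2 < p.1 then Y p.2 ω else Z p.2 ω)
    (Finset.Iic T ×ˢ Finset.Iic T) (hτ.prodMk hσ) (fun ω => by simp [hτT ω, hσT ω])
    fun p _ => ?_
  rcases lt_trichotomy p.1 p.2 with h | h | h
  · simpa [h] using hX p.1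
  · simpa [h] using hZ p.2
  · simpa [h, h.not_gt] using hY p.2

lemma payoffD_neg_swap : payoffD (-Y) (-X) (-Z) σ τ = -payoffD X Y Z τ σ := by
  ext ω
  rcases lt_trichotomy (τ ω) (σ ω) with h | h | h
  · simp [payoffD, h, h.not_gt]
  · simp [payoffD, h]
  · simp [payoffD, h, h.not_gt]

end Payoff

section Game

variable {Ω : Type*} {m0 : MeasurableSpace Ω}

structure IsDynkinGame (μ : Measure Ω) (ℱ : Filtration ℕ m0) (T : ℕ) (X Y Z : ℕ → Ω → ℝ) :
    Prop where
  adapted_X : Adapted ℱ X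
  adapted_Y : Adapted ℱ Y
  adapted_Z : Adapted ℱ Z
  integrable_X : ∀ s, Integrable (X s) μ
  integrable_Y : ∀ s, Integrable (Y s) μ
  integrable_Z : ∀ s, Integrable (Z s) μ
  terminal_X : X T = Z T
  terminal_Y : Y T = Z T

structure IsDynkinValue (μ : Measure Ω) (ℱ : Filtration ℕ m0) (T : ℕ) (X Y Z V : ℕ → Ω → ℝ) :
    Prop where
  measurable : ∀ s ≤ T, Measurable[ℱ s] (V s)
  integrable : ∀ s ≤ T, Integrable (V s) μ
  terminal : V T = Z T
  recursion : ∀ s < T, ∀ᵐ ω ∂μ, V s ω =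
    min (max (Y s ω) (Z s ω)) (max (min (X s ω) (Z s ω)) (μ[V (s + 1) | ℱ s] ω))

def IsStoppingTimeIcc (ℱ : Filtration ℕ m0) (t T : ℕ) (τ : Ω → ℕ) : Prop :=
  IsStoppingTime ℱ (fun ω => (τ ω : WithTop ℕ)) ∧ ∀ ω, τ ω ∈ Icc t T

def Secures (μ : Measure Ω) (ℱ : Filtration ℕ m0) (X Y Z : ℕ → Ω → ℝ) (t T : ℕ) (τ : Ω → ℕ)
    (W : Ω → ℝ) : Prop :=
  IsStoppingTimeIcc ℱ t T τ ∧
    ∀ σ, IsStoppingTimeIcc ℱ t T σ → W ≤ᵐ[μ] μ[payoffD X Y Z τ σ | ℱ t]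

def IsNashEquilibrium (μ : Measure Ω) (ℱ : Filtration ℕ m0) (X Y Z : ℕ → Ω → ℝ) (t T : ℕ)
    (τs σs : Ω → ℕ) : Prop :=
  IsStoppingTime ℱ (fun ω => (τs ω : WithTop ℕ)) ∧ IsStoppingTime ℱ (fun ω => (σs ω : WithTop ℕ)) ∧
    (∀ ω, τs ω ∈ Icc t T) ∧ (∀ ω, σs ω ∈ Icc t T) ∧
    ∀ τ σ : Ω → ℕ, IsStoppingTime ℱ (fun ω => (τ ω : WithTop ℕ)) →
      IsStoppingTime ℱ (fun ω => (σ ω : WithTop ℕ)) →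
      (∀ ω, τ ω ∈ Icc t T) → (∀ ω, σ ω ∈ Icc t T) →
      (μ[payoffD X Y Z τs σs | ℱ t] ≤ᵐ[μ] μ[payoffD X Y Z τs σ | ℱ t]) ∧
      (μ[payoffD X Y Z τ σs | ℱ t] ≤ᵐ[μ] μ[payoffD X Y Z τs σs | ℱ t])

variable {μ : Measure Ω} {ℱ : Filtration ℕ m0} {T t : ℕ} {X Y Z V : ℕ → Ω → ℝ}

lemma condExp_payoffD_neg_swap (m : MeasurableSpace Ω) (τ σ : Ω → ℕ) :
    μ[payoffD (-Y) (-X) (-Z) σ τ | m] =ᵐ[μ] -μ[payoffD X Y Z τ σ | m] := by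
  rw [payoffD_neg_swap]
  exact condExp_neg _ m

lemma IsDynkinGame.neg_swap (hG : IsDynkinGame μ ℱ T X Y Z) :
    IsDynkinGame μ ℱ T (-Y) (-X) (-Z) where
  adapted_X := hG.adapted_Y.neg
  adapted_Y := hG.adapted_X.neg
  adapted_Z := hG.adapted_Z.neg
  integrable_X s := (hG.integrable_Y s).neg
  integrable_Y s := (hG.integrable_X s).neg
  integrable_Z s := (hG.integrable_Z s).neg
  terminal_X := by simp [hG.terminal_Y]
  terminal_Y := by simp [hG.terminal_X]

lemma IsDynkinValue.neg_swap (hv : IsDynkinValue μ ℱ T X Y Z V) :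
    IsDynkinValue μ ℱ T (-Y) (-X) (-Z) (-V) where
  measurable s hs := (hv.measurable s hs).neg
  integrable s hs := (hv.integrable s hs).neg
  terminal := by simp [hv.terminal]
  recursion s hs := by
    filter_upwards [hv.recursion s hs, condExp_neg (V (s + 1)) (ℱ s) (μ := μ)] with ω h hneg
    simp only [Pi.neg_apply, hneg, h, max_neg_neg, min_neg_neg, neg_inj]
    -- `max L (min U e) = min U (max L e)` because `L = X ∧ Z ≤ Y ∨ Z = U`
    rw [max_min_distrib_left, max_eq_right ((min_le_right _ _).trans (le_max_right _ _))]

lemma IsNashEquilibrium.neg_swap {τs σs : Ω → ℕ} (hN : IsNashEquilibrium μ ℱ X Y Z t T τs σs) :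
    IsNashEquilibrium μ ℱ (-Y) (-X) (-Z) t T σs τs := by
  obtain ⟨hτs, hσs, hτsI, hσsI, hN⟩ := hN
  refine ⟨hσs, hτs, hσsI, hτsI, fun a b ha hb haI hbI => ⟨?_, ?_⟩⟩
  · filter_upwards [(hN b σs hb hσs hbI hσsI).2, condExp_payoffD_neg_swap (μ := μ) (ℱ t) τs σs,
      condExp_payoffD_neg_swap (μ := μ) (ℱ t) b σs] with ω h h₁ h₂
    rw [h₁, h₂, Pi.neg_apply, Pi.neg_apply, neg_le_neg_iff]
    exact h
  · filter_upwards [(hN τs a hτs ha hτsI haI).1, condExp_payoffD_neg_swap (μ := μ) (ℱ t) τs a,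
      condExp_payoffD_neg_swap (μ := μ) (ℱ t) τs σs] with ω h h₁ h₂
    rw [h₁, h₂, Pi.neg_apply, Pi.neg_apply, neg_le_neg_iff]
    exact h

lemma Secures.isNashEquilibrium {τs σs : Ω → ℕ} {W : Ω → ℝ}
    (hτs : Secures μ ℱ X Y Z t T τs W) (hσs : Secures μ ℱ (-Y) (-X) (-Z) t T σs (-W)) :
    IsNashEquilibrium μ ℱ X Y Z t T τs σs := by
  have hupper : ∀ τ, IsStoppingTimeIcc ℱ t T τ → μ[payoffD X Y Z τ σs | ℱ t] ≤ᵐ[μ] W := by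
    intro τ hτ
    filter_upwards [hσs.2 τ hτ, condExp_payoffD_neg_swap (μ := μ) (ℱ t) τ σs] with ω h hneg
    rw [hneg, Pi.neg_apply, Pi.neg_apply, neg_le_neg_iff] at h
    exact h
  refine ⟨hτs.1.1, hσs.1.1, hτs.1.2, hσs.1.2, fun τ σ hτ hσ hτI hσI => ⟨?_, ?_⟩⟩
  · exact (hupper τs hτs.1).trans (hτs.2 σ ⟨hσ, hσI⟩)
  · exact (hupper τ ⟨hτ, hτI⟩).trans (hτs.2 σs hσs.1)

end Game

section Forward

variable {Ω : Type*} {m0 : MeasurableSpace Ω} {μ : Measure Ω} {ℱ : Filtration ℕ m0}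
  {T t n : ℕ} {X Y Z V : ℕ → Ω → ℝ}

lemma le_payoffD_of_stop {τ σ : Ω → ℕ} {ω : Ω} {v : ℝ} (hτn : n ≤ τ ω) (hσn : n ≤ σ ω)
    (hstop : τ ω = n ∨ σ ω = n) (hX : τ ω = n → v ≤ min (X n ω) (Z n ω))
    (hY : n < τ ω → σ ω = n → v ≤ Y n ω) : v ≤ payoffD X Y Z τ σ ω := by
  rcases hτn.eq_or_lt with hτ | hτ
  · have hv := hX hτ.symm
    rcases hσn.eq_or_lt with hσ | hσ
    · simpa [payoffD, ← hτ, ← hσ] using hv.trans (min_le_right _ _)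
    · simpa [payoffD, ← hτ, hσ] using hv.trans (min_le_left _ _)
  · have hσ : σ ω = n := hstop.resolve_left hτ.ne'
    simpa [payoffD, hσ, hτ, hτ.not_gt] using hY hτ hσ

noncomputable def lowerHitting (X Z V : ℕ → Ω → ℝ) (t T : ℕ) : Ω → ℕ :=
  hittingBtwn (fun s ω => V s ω - min (X s ω) (Z s ω)) (Iic 0) t T

lemma min_lt_of_lt_lowerHitting {ω : Ω} (htn : t ≤ n) (hn : n < lowerHitting X Z V t T ω) :
    min (X n ω) (Z n ω) < V n ω := by
  have := notMem_of_lt_hittingBtwn hn htn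
  rwa [mem_Iic, sub_nonpos, not_le] at this

namespace IsDynkinValue

lemma isStoppingTimeIcc_lowerHitting (hv : IsDynkinValue μ ℱ T X Y Z V)
    (hG : IsDynkinGame μ ℱ T X Y Z) (ht : t ≤ T) :
    IsStoppingTimeIcc ℱ t T (lowerHitting X Z V t T) :=
  ⟨isStoppingTime_hittingBtwn_of_measurable_le
    (fun k hk => (hv.measurable k hk).sub ((hG.adapted_X k).min (hG.adapted_Z k)))
    measurableSet_Iic, hittingBtwn_mem_Icc ht⟩

lemma apply_lowerHitting_le (hv : IsDynkinValue μ ℱ T X Y Z V)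
    (hG : IsDynkinGame μ ℱ T X Y Z) (ht : t ≤ T) (ω : Ω) :
    V (lowerHitting X Z V t T ω) ω ≤
      min (X (lowerHitting X Z V t T ω) ω) (Z (lowerHitting X Z V t T ω) ω) := by
  have := hittingBtwn_mem_set (u := fun s ω => V s ω - min (X s ω) (Z s ω)) (s := Iic 0)
    (ω := ω) ⟨T, ⟨ht, le_rfl⟩, by simp [hv.terminal, hG.terminal_X]⟩
  simpa [lowerHitting] using this

lemma ae_le_max_Y_Z (hv : IsDynkinValue μ ℱ T X Y Z V) (hn : n ≤ T) :
    ∀ᵐ ω ∂μ, V n ω ≤ max (Y n ω) (Z n ω) := by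
  rcases hn.lt_or_eq with hn | rfl
  · filter_upwards [hv.recursion n hn] with ω h
    exact h ▸ min_le_left _ _
  · exact ae_of_all _ fun ω => by simp [hv.terminal]

lemma ae_le_payoffD_lowerHitting_of_stop (hv : IsDynkinValue μ ℱ T X Y Z V)
    (hG : IsDynkinGame μ ℱ T X Y Z) (htn : t ≤ n) (hnT : n ≤ T)
    (hup : ∀ᵐ ω ∂μ, V n ω ≤ max (X n ω) (Y n ω)) (σ : Ω → ℕ) :
    ∀ᵐ ω ∂μ, n ≤ lowerHitting X Z V t T ω → n ≤ σ ω →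
      ¬(n < lowerHitting X Z V t T ω ∧ n < σ ω) →
      V n ω ≤ payoffD X Y Z (lowerHitting X Z V t T) σ ω := by
  filter_upwards [hup, hv.ae_le_max_Y_Z hnT] with ω hXY hYZ hτn hσn hstop
  refine le_payoffD_of_stop hτn hσn ?_ (fun h => h ▸ hv.apply_lowerHitting_le hG (htn.trans hnT) ω)
    fun hlt _ => ?_
  · by_contra! hne
    exact hstop ⟨hτn.lt_of_ne' hne.1, hσn.lt_of_ne' hne.2⟩
  · by_contra! hY
    have hX := (le_max_iff.1 hXY).resolve_right hY.not_ge
    have hZ := (le_max_iff.1 hYZ).resolve_left hY.not_ge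
    exact (min_lt_of_lt_lowerHitting htn hlt).not_ge (le_min hX hZ)

lemma ae_le_condExp_payoffD_lowerHitting_of_succ [IsFiniteMeasure μ]
    (hv : IsDynkinValue μ ℱ T X Y Z V) (hG : IsDynkinGame μ ℱ T X Y Z) (htn : t ≤ n) (hnT : n ≤ T)
    (hup : ∀ᵐ ω ∂μ, V n ω ≤ max (X n ω) (Y n ω))
    {σ : Ω → ℕ} (hσ : IsStoppingTimeIcc ℱ t T σ)
    (hsucc : n < T → ∀ᵐ ω ∂μ, n + 1 ≤ lowerHitting X Z V t T ω → n + 1 ≤ σ ω →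
      V (n + 1) ω ≤ μ[payoffD X Y Z (lowerHitting X Z V t T) σ | ℱ (n + 1)] ω) :
    ∀ᵐ ω ∂μ, n ≤ lowerHitting X Z V t T ω → n ≤ σ ω →
      V n ω ≤ μ[payoffD X Y Z (lowerHitting X Z V t T) σ | ℱ n] ω := by
  set τ := lowerHitting X Z V t T
  obtain ⟨hτ, hτI⟩ := hv.isStoppingTimeIcc_lowerHitting hG (htn.trans hnT)
  set R := payoffD X Y Z τ σ
  have hR : Integrable R μ := integrable_payoffD hG.integrable_X hG.integrable_Y hG.integrable_Z
    hτ.measurable_nat hσ.1.measurable_nat (fun ω => (hτI ω).2) (fun ω => (hσ.2 ω).2)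
  set S := {ω | n < τ ω} ∩ {ω | n < σ ω}
  have hS : MeasurableSet[ℱ n] S :=
    (hτ.measurableSet_gt_nat n).inter (hσ.1.measurableSet_gt_nat n)
  have hstop : ∀ᵐ ω ∂μ, ω ∈ ({ω | n ≤ τ ω} ∩ {ω | n ≤ σ ω}) \ S → V n ω ≤ μ[R | ℱ n] ω := by
    have hD := ((hτ.measurableSet_ge_nat n).inter (hσ.1.measurableSet_ge_nat n)).diff hS
    have := condExp_mono_on hD (hv.integrable n hnT) hR <| by
      filter_upwards [hv.ae_le_payoffD_lowerHitting_of_stop hG htn hnT hup σ] with ω h hω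
      exact h hω.1.1 hω.1.2 hω.2
    rwa [condExp_of_stronglyMeasurable (ℱ.le n) (hv.measurable n hnT).stronglyMeasurable
      (hv.integrable n hnT)] at this
  have hcont : ∀ᵐ ω ∂μ, ω ∈ S → V n ω ≤ μ[R | ℱ n] ω := by
    rcases hnT.lt_or_eq with hnT | rfl
    · have hmono := condExp_mono_on (m := ℱ n) hS (hv.integrable (n + 1) hnT) integrable_condExp
        (by filter_upwards [hsucc hnT] with ω h hω using h hω.1 hω.2)
      filter_upwards [hmono, hv.recursion n hnT,
        condExp_condExp_of_le (μ := μ) (f := R) (ℱ.mono n.le_succ) (ℱ.le (n + 1))]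
        with ω hmono hrec htower hω
      calc V n ω ≤ μ[V (n + 1) | ℱ n] ω :=
            (le_max_iff.1 (hrec ▸ min_le_right _ _)).resolve_left
              (min_lt_of_lt_lowerHitting htn hω.1).not_ge
        _ ≤ μ[μ[R | ℱ (n + 1)] | ℱ n] ω := hmono hω
        _ = μ[R | ℱ n] ω := htower
    · exact ae_of_all _ fun ω hω => absurd (hτI ω).2 hω.1.not_ge
  filter_upwards [hstop, hcont] with ω h₁ h₂ hτn hσn
  by_cases hω : ω ∈ S
  · exact h₂ hω
  · exact h₁ ⟨⟨hτn, hσn⟩, hω⟩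

lemma secures_lowerHitting [IsFiniteMeasure μ] (hv : IsDynkinValue μ ℱ T X Y Z V)
    (hG : IsDynkinGame μ ℱ T X Y Z) (ht : t ≤ T)
    (hup : ∀ s ∈ Icc t T, ∀ᵐ ω ∂μ, V s ω ≤ max (X s ω) (Y s ω)) :
    Secures μ ℱ X Y Z t T (lowerHitting X Z V t T) (V t) := by
  have hτ := hv.isStoppingTimeIcc_lowerHitting hG ht
  refine ⟨hτ, fun σ hσ => ?_⟩
  have step {n : ℕ} (htn : t ≤ n) (hnT : n ≤ T) :=
    hv.ae_le_condExp_payoffD_lowerHitting_of_succ hG htn hnT (hup n ⟨htn, hnT⟩) hσ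
  have key := Nat.decreasingInduction' (P := fun n => ∀ᵐ ω ∂μ, n ≤ lowerHitting X Z V t T ω →
      n ≤ σ ω → V n ω ≤ μ[payoffD X Y Z (lowerHitting X Z V t T) σ | ℱ n] ω)
    (fun k hk htk ih => step htk hk.le fun _ => ih) ht (step ht le_rfl fun h => h.false.elim)
  filter_upwards [key] with ω h using h (hτ.2 ω).1 (hσ.2 ω).1

end IsDynkinValue

end Forward

section Backward

variable {Ω : Type*} {m0 : MeasurableSpace Ω} {μ : Measure Ω} {ℱ : Filtration ℕ m0}
  {T t : ℕ} {X Y Z V : ℕ → Ω → ℝ} {τs σs : Ω → ℕ}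

namespace IsNashEquilibrium

lemma ae_condExp_le_max [IsFiniteMeasure μ] (hN : IsNashEquilibrium μ ℱ X Y Z t T τs σs)
    (hG : IsDynkinGame μ ℱ T X Y Z) (htT : t < T) :
    ∀ᵐ ω ∂μ, μ[payoffD X Y Z τs σs | ℱ t] ω ≤ max (X t ω) (Y t ω) := by
  classical
  obtain ⟨hτs, -, hτsI, -, hN⟩ := hN
  set B := {ω | t < τs ω}
  have hB : MeasurableSet[ℱ t] B := hτs.measurableSet_gt_nat t
  set σ : Ω → ℕ := B.piecewise (fun _ => t) (fun _ => T)
  have hσ : IsStoppingTime ℱ fun ω => (σ ω : WithTop ℕ) :=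
    (isStoppingTime_const ℱ t).piecewise_of_le_nat (isStoppingTime_const ℱ T) (fun _ => le_rfl)
      (fun _ => htT.le) hB
  have hσI : ∀ ω, σ ω ∈ Icc t T := fun ω => by
    by_cases hω : ω ∈ B <;> simp [σ, hω, htT.le]
  have hR : payoffD X Y Z τs σ = B.piecewise (Y t) (X t) := by
    ext ω
    by_cases hω : ω ∈ B
    · have hτ : t < τs ω := hω
      simp [payoffD, σ, hω, hτ, hτ.not_gt]
    · have hτ : τs ω = t := le_antisymm (not_lt.1 hω) (hτsI ω).1
      simp [payoffD, σ, hω, hτ, htT]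
  have hRm : StronglyMeasurable[ℱ t] (B.piecewise (Y t) (X t)) :=
    ((hG.adapted_Y t).piecewise hB (hG.adapted_X t)).stronglyMeasurable
  have hRi : Integrable (B.piecewise (Y t) (X t)) μ :=
    Integrable.piecewise (ℱ.le t _ hB) (hG.integrable_Y t).integrableOn
      (hG.integrable_X t).integrableOn
  filter_upwards [(hN τs σ hτs hσ hτsI hσI).1] with ω h
  rw [hR, condExp_of_stronglyMeasurable (ℱ.le t) hRm hRi] at h
  refine h.trans ?_
  by_cases hω : ω ∈ B <;> simp [hω]

lemma ae_min_le_condExp [IsFiniteMeasure μ] (hN : IsNashEquilibrium μ ℱ X Y Z t T τs σs)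
    (hG : IsDynkinGame μ ℱ T X Y Z) (htT : t < T) {τ' : Ω → ℕ} {W : Ω → ℝ}
    (hτ' : Secures μ ℱ X Y Z (t + 1) T τ' W) (hW : Integrable W μ) :
    ∀ᵐ ω ∂μ, min (Z t ω) (μ[W | ℱ t] ω) ≤ μ[payoffD X Y Z τs σs | ℱ t] ω := by
  classical
  obtain ⟨-, hσs, -, hσsI, hN⟩ := hN
  obtain ⟨⟨hτ'st, hτ'I⟩, hτ'W⟩ := hτ'
  set B := {ω | t < σs ω}
  have hB : MeasurableSet[ℱ t] B := hσs.measurableSet_gt_nat t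
  set τ : Ω → ℕ := B.piecewise τ' (fun _ => t)
  have hτ : IsStoppingTime ℱ fun ω => (τ ω : WithTop ℕ) :=
    hτ'st.piecewise_of_le_nat (isStoppingTime_const ℱ t) (fun ω => (hτ'I ω).1.trans' t.le_succ)
      (fun _ => le_rfl) hB
  have hτI : ∀ ω, τ ω ∈ Icc t T := fun ω => by
    by_cases hω : ω ∈ B
    · simpa [τ, hω] using ⟨(hτ'I ω).1.trans' t.le_succ, (hτ'I ω).2⟩
    · simp [τ, hω, htT.le]
  set σ : Ω → ℕ := B.piecewise σs (fun _ => t + 1)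
  have hσ : IsStoppingTimeIcc ℱ (t + 1) T σ := by
    refine ⟨hσs.piecewise_of_le_nat (isStoppingTime_const ℱ (t + 1)) (fun ω => (hσsI ω).1)
      (fun _ => t.le_succ) hB, fun ω => ?_⟩
    by_cases hω : ω ∈ B
    · simpa [σ, hω] using ⟨(show t < σs ω from hω), (hσsI ω).2⟩
    · simpa [σ, hω] using htT
  have hR : payoffD X Y Z τ σs = B.piecewise (payoffD X Y Z τ' σ) (Z t) := by
    ext ω
    by_cases hω : ω ∈ B
    · simp [payoffD, τ, σ, hω]
    · have hσ : σs ω = t := le_antisymm (not_lt.1 hω) (hσsI ω).1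
      simp [payoffD, τ, hω, hσ]
  have hRi : Integrable (payoffD X Y Z τ' σ) μ :=
    integrable_payoffD hG.integrable_X hG.integrable_Y hG.integrable_Z hτ'st.measurable_nat
      hσ.1.measurable_nat (fun ω => (hτ'I ω).2) (fun ω => (hσ.2 ω).2)
  have hWR : μ[W | ℱ t] ≤ᵐ[μ] μ[payoffD X Y Z τ' σ | ℱ t] := by
    filter_upwards [condExp_mono (m := ℱ t) hW integrable_condExp (hτ'W σ hσ),
      condExp_condExp_of_le (μ := μ) (f := payoffD X Y Z τ' σ) (ℱ.mono t.le_succ) (ℱ.le (t + 1))]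
      with ω h htower
    exact h.trans htower.le
  filter_upwards [(hN τ σs hτ hσs hτI hσsI).2, condExp_piecewise hB hRi (hG.integrable_Z t), hWR]
    with ω h hpw hWR
  rw [hR, hpw, condExp_of_stronglyMeasurable (ℱ.le t) (hG.adapted_Z t).stronglyMeasurable
    (hG.integrable_Z t)] at h
  refine le_trans ?_ h
  by_cases hω : ω ∈ B
  · simpa [hω] using Or.inr hWR
  · simp [hω]

end IsNashEquilibrium

end Backward

namespace IsDynkinValue

variable {Ω : Type*} {m0 : MeasurableSpace Ω} {μ : Measure Ω} {ℱ : Filtration ℕ m0}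
  {T t : ℕ} {X Y Z V : ℕ → Ω → ℝ}

lemma of_forall_eq (hG : IsDynkinGame μ ℱ T X Y Z) (hVT : ∀ ω, V T ω = Z T ω)
    (hV : ∀ s < T, ∀ ω, V s ω =
      min (max (Y s ω) (Z s ω)) (max (min (X s ω) (Z s ω)) (μ[V (s + 1) | ℱ s] ω))) :
    IsDynkinValue μ ℱ T X Y Z V where
  measurable s hs := by
    rcases hs.lt_or_eq with hs | rfl
    · rw [funext (hV s hs)]
      exact ((hG.adapted_Y s).max (hG.adapted_Z s)).min
        (((hG.adapted_X s).min (hG.adapted_Z s)).max stronglyMeasurable_condExp.measurable)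
    · exact funext hVT ▸ hG.adapted_Z s
  integrable s hs := by
    rcases hs.lt_or_eq with hs | rfl
    · rw [funext (hV s hs)]
      exact ((hG.integrable_Y s).sup (hG.integrable_Z s)).inf
        (((hG.integrable_X s).inf (hG.integrable_Z s)).sup integrable_condExp)
    · exact funext hVT ▸ hG.integrable_Z s
  terminal := funext hVT
  recursion s hs := ae_of_all _ (hV s hs)

lemma ae_le_max_of_isNashEquilibrium [IsFiniteMeasure μ] (hv : IsDynkinValue μ ℱ T X Y Z V)
    (hG : IsDynkinGame μ ℱ T X Y Z) (htT : t < T) {τs σs : Ω → ℕ}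
    (hN : IsNashEquilibrium μ ℱ X Y Z t T τs σs)
    (hup : ∀ s ∈ Icc (t + 1) T, ∀ᵐ ω ∂μ, V s ω ≤ max (X s ω) (Y s ω)) :
    ∀ᵐ ω ∂μ, V t ω ≤ max (X t ω) (Y t ω) := by
  have hsec := hv.secures_lowerHitting hG htT hup
  filter_upwards [hN.ae_condExp_le_max hG htT,
    hN.ae_min_le_condExp hG htT hsec (hv.integrable _ htT), hv.recursion t htT]
    with ω hmax hmin hrec
  exact (le_max_max_min_of_eq hrec).trans (max_le le_rfl (hmin.trans hmax))

lemma sandwich_iff_nash [IsFiniteMeasure μ] (hv : IsDynkinValue μ ℱ T X Y Z V)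
    (hG : IsDynkinGame μ ℱ T X Y Z) :
    (∀ t, t ≤ T → ∀ᵐ ω ∂μ, min (X t ω) (Y t ω) ≤ V t ω ∧ V t ω ≤ max (X t ω) (Y t ω)) ↔
      ∀ t, t ≤ T → ∃ τs σs, IsNashEquilibrium μ ℱ X Y Z t T τs σs := by
  constructor
  · intro h t ht
    have hup : ∀ s ∈ Icc t T, ∀ᵐ ω ∂μ, V s ω ≤ max (X s ω) (Y s ω) :=
      fun s hs => (h s hs.2).mono fun ω h => h.2
    have hlow : ∀ s ∈ Icc t T, ∀ᵐ ω ∂μ, (-V) s ω ≤ max ((-Y) s ω) ((-X) s ω) :=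
      fun s hs => (h s hs.2).mono fun ω h => neg_le_max_neg_neg_iff.2 h.1
    exact ⟨_, _, (hv.secures_lowerHitting hG ht hup).isNashEquilibrium
      (hv.neg_swap.secures_lowerHitting hG.neg_swap ht hlow)⟩
  · intro h
    suffices H : ∀ t ≤ T, ∀ s ∈ Icc t T,
        ∀ᵐ ω ∂μ, min (X s ω) (Y s ω) ≤ V s ω ∧ V s ω ≤ max (X s ω) (Y s ω) from
      fun t ht => H t ht t ⟨le_rfl, ht⟩
    intro t ht
    induction ht using Nat.decreasingInduction with
    | self =>
      intro s hs
      obtain rfl := le_antisymm hs.2 hs.1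
      exact ae_of_all _ fun ω => by simp [hv.terminal, hG.terminal_X, hG.terminal_Y]
    | of_succ k hk ih =>
      obtain ⟨τs, σs, hN⟩ := h k hk.le
      have hup := hv.ae_le_max_of_isNashEquilibrium hG hk hN
        fun s hs => (ih s hs).mono fun ω h => h.2
      have hlow := hv.neg_swap.ae_le_max_of_isNashEquilibrium hG.neg_swap hk hN.neg_swap
        fun s hs => (ih s hs).mono fun ω h => neg_le_max_neg_neg_iff.2 h.1
      intro s hs
      rcases hs.1.eq_or_lt with rfl | hlt
      · filter_upwards [hup, hlow] with ω h₁ h₂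
        exact ⟨neg_le_max_neg_neg_iff.1 h₂, h₁⟩
      · exact ih s ⟨hlt, hs.2⟩

end IsDynkinValue

/-- Main discrete-time theorem: for the backward-induction process `V` built from
`L = X ∧ Z` and `U = Y ∨ Z`, the sandwich condition `X_t ∧ Y_t ≤ V_t ≤ X_t ∨ Y_t`
holds (a.s.) for all `t = 0, ..., T` if and only if the general Dynkin game
`GDG_t(X,Y,Z)` admits a Nash equilibrium for every `t = 0, ..., T`. -/
theorem stmt13 {Ω : Type*} {m0 : MeasurableSpace Ω} (μ : Measure Ω) [IsProbabilityMeasure μ]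
    (ℱ : Filtration ℕ m0) (T : ℕ)
    (X Y Z V : ℕ → Ω → ℝ)
    (hXa : Adapted ℱ X) (hYa : Adapted ℱ Y) (hZa : Adapted ℱ Z)
    (hXi : ∀ s, Integrable (X s) μ) (hYi : ∀ s, Integrable (Y s) μ)
    (hZi : ∀ s, Integrable (Z s) μ)
    (htermX : ∀ ω, X T ω = Z T ω) (htermY : ∀ ω, Y T ω = Z T ω)
    (hVT : ∀ ω, V T ω = Z T ω)
    (hV : ∀ s, s < T → ∀ ω, V s ω =
      min (max (Y s ω) (Z s ω))
        (max (min (X s ω) (Z s ω)) ((μ[V (s + 1) | ℱ s]) ω))) :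
    (∀ t, t ≤ T → ∀ᵐ ω ∂μ,
        min (X t ω) (Y t ω) ≤ V t ω ∧ V t ω ≤ max (X t ω) (Y t ω)) ↔
    (∀ t, t ≤ T → ∃ τs σs : Ω → ℕ,
        IsStoppingTime ℱ (fun ω => (τs ω : WithTop ℕ)) ∧ IsStoppingTime ℱ (fun ω => (σs ω : WithTop ℕ)) ∧
        (∀ ω, τs ω ∈ Set.Icc t T) ∧ (∀ ω, σs ω ∈ Set.Icc t T) ∧
        ∀ τ σ : Ω → ℕ, IsStoppingTime ℱ (fun ω => (τ ω : WithTop ℕ)) → IsStoppingTime ℱ (fun ω => (σ ω : WithTop ℕ)) →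
          (∀ ω, τ ω ∈ Set.Icc t T) → (∀ ω, σ ω ∈ Set.Icc t T) →
          (μ[payoffD X Y Z τs σs | ℱ t] ≤ᵐ[μ] μ[payoffD X Y Z τs σ | ℱ t]) ∧
          (μ[payoffD X Y Z τ σs | ℱ t] ≤ᵐ[μ] μ[payoffD X Y Z τs σs | ℱ t])) := by
  have hG : IsDynkinGame μ ℱ T X Y Z :=
    ⟨hXa, hYa, hZa, hXi, hYi, hZi, funext htermX, funext htermY⟩
  exact (IsDynkinValue.of_forall_eq hG hVT hV).sandwich_iff_nash hG
end

section
/- Let G and H be progressively measurable integrable processes on [0,T], G right lower semicontinuous and H right-continuous. If for each fixed t ∈ [0,T], G_t ≤ H_t almost surely, then for every stopping time ρ with values in [0,T], G_ρ ≤ H_ρ almost surely. -/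
open MeasureTheory Filter Set Topology

/-!
Off a single null set, `G_q ≤ H_q` holds simultaneously for all rational `q ∈ [0,T]` and for
`q = T`. Every `t ∈ [0,T)` is a limit from the right of such rationals, and along them the
inequality passes to the limit because `G` is right lower semicontinuous and `H` right-continuous.
So almost every path satisfies `G_t ≤ H_t` for all `t ∈ [0,T]` at once, in particular at `t = ρ`.
-/

theorem le_of_frequently_le_of_lowerSemicontinuousWithinAt {α β : Type*} [TopologicalSpace α]
    [LinearOrder β] [DenselyOrdered β] [TopologicalSpace β] [OrderTopology β]
    {f g : α → β} {s : Set α} {x : α} (hf : LowerSemicontinuousWithinAt f s x)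
    (hg : ContinuousWithinAt g s x) (h : ∃ᶠ y in 𝓝[s] x, f y ≤ g y) : f x ≤ g x := by
  by_contra! hlt
  obtain ⟨c, hgc, hcf⟩ := exists_between hlt
  have hsep : ∀ᶠ y in 𝓝[s] x, g y < c ∧ c < f y :=
    (hg.eventually (eventually_lt_nhds hgc)).and (hf c hcf)
  exact h (hsep.mono fun _ hy => not_le.2 (hy.1.trans hy.2))

theorem frequently_nhdsGE_ratCast_mem_Ioo {t b : ℝ} (htb : t < b) :
    ∃ᶠ x in 𝓝[≥] t, x ∈ range ((↑) : ℚ → ℝ) ∧ x ∈ Ioo t b := by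
  rw [frequently_iff]
  intro U hU
  obtain ⟨u, htu, hsub⟩ := mem_nhdsGE_iff_exists_Ico_subset.1 hU
  obtain ⟨q, htq, hq⟩ := exists_rat_btwn (lt_min htu htb)
  exact ⟨q, hsub ⟨htq.le, hq.trans_le (min_le_left _ _)⟩, mem_range_self q,
    htq, hq.trans_le (min_le_right _ _)⟩

theorem ae_forall_mem_Icc_le_of_forall_ae_le {Ω : Type*} {m0 : MeasurableSpace Ω}
    {μ : Measure Ω} {a b : ℝ} {G H : ℝ → Ω → ℝ}
    (hG : ∀ ω t, LowerSemicontinuousWithinAt (fun s => G s ω) (Ici t) t)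
    (hH : ∀ ω t, ContinuousWithinAt (fun s => H s ω) (Ici t) t)
    (hle : ∀ t ∈ Icc a b, ∀ᵐ ω ∂μ, G t ω ≤ H t ω) :
    ∀ᵐ ω ∂μ, ∀ t ∈ Icc a b, G t ω ≤ H t ω := by
  set D : Set ℝ := (range ((↑) : ℚ → ℝ) ∪ {b}) ∩ Icc a b
  have hD : D.Countable := ((countable_range _).union (countable_singleton b)).mono inter_subset_left
  have hDle : ∀ᵐ ω ∂μ, ∀ t ∈ D, G t ω ≤ H t ω :=
    (ae_ball_iff hD).2 fun t ht => hle t ht.2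
  filter_upwards [hDle] with ω hω t ht
  rcases ht.2.eq_or_lt with rfl | htb
  · exact hω t ⟨Or.inr rfl, ht⟩
  refine le_of_frequently_le_of_lowerSemicontinuousWithinAt (f := fun s => G s ω)
    (g := fun s => H s ω) (hG ω t) (hH ω t) ?_
  exact (frequently_nhdsGE_ratCast_mem_Ioo htb).mono fun x ⟨hq, hxt, hxb⟩ =>
    hω x ⟨Or.inl hq, ht.1.trans hxt.le, hxb.le⟩

theorem stmt15_general {Ω : Type*} {m0 : MeasurableSpace Ω} (μ : Measure Ω)
    (T : ℝ)
    (G H : ℝ → Ω → ℝ)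
    (hGrlsc : ∀ ω t, LowerSemicontinuousWithinAt (fun s => G s ω) (Set.Ici t) t)
    (hHrc : ∀ ω t, ContinuousWithinAt (fun s => H s ω) (Set.Ici t) t)
    (hle : ∀ t ∈ Set.Icc (0 : ℝ) T, ∀ᵐ ω ∂μ, G t ω ≤ H t ω)
    (ρ : Ω → ℝ) (hρr : ∀ ω, ρ ω ∈ Set.Icc 0 T) :
    ∀ᵐ ω ∂μ, G (ρ ω) ω ≤ H (ρ ω) ω := by
  filter_upwards [ae_forall_mem_Icc_le_of_forall_ae_le hGrlsc hHrc hle] with ω hω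
  exact hω (ρ ω) (hρr ω)

/-- Let `G` and `H` be progressively measurable integrable processes on `[0,T]`, with
`G` right lower semicontinuous and `H` right-continuous.  If for each fixed `t ∈ [0,T]`
we have `G_t ≤ H_t` a.s., then for every stopping time `ρ` with values in `[0,T]`,
`G_ρ ≤ H_ρ` a.s. -/
theorem stmt15 {Ω : Type*} {m0 : MeasurableSpace Ω} (μ : Measure Ω) [IsProbabilityMeasure μ]
    (ℱ : Filtration ℝ m0) (T : ℝ) (hT : 0 ≤ T)
    (G H : ℝ → Ω → ℝ)
    (hGprog : ProgMeasurable ℱ G) (hHprog : ProgMeasurable ℱ H)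
    (hGint : ∀ t, Integrable (G t) μ) (hHint : ∀ t, Integrable (H t) μ)
    (hGrlsc : ∀ ω t, LowerSemicontinuousWithinAt (fun s => G s ω) (Set.Ici t) t)
    (hHrc : ∀ ω t, ContinuousWithinAt (fun s => H s ω) (Set.Ici t) t)
    (hle : ∀ t ∈ Set.Icc (0 : ℝ) T, ∀ᵐ ω ∂μ, G t ω ≤ H t ω)
    (ρ : Ω → ℝ) (hρ : IsStoppingTime ℱ (fun ω => (ρ ω : WithTop ℝ))) (hρr : ∀ ω, ρ ω ∈ Set.Icc 0 T) :
    ∀ᵐ ω ∂μ, G (ρ ω) ω ≤ H (ρ ω) ω :=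
  stmt15_general (m0 := m0) μ T G H hGrlsc hHrc hle ρ hρr
end
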